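/- Let π be any policy sequence and let p = (p_n) and q = (q_n) be two transition kernel sequences on X × A → Δ(X). Then for every n ∈ [N], the induced state-action distributions satisfy ‖μ_n^{π,p} − μ_n^{π,q}‖₁ ≤ Σ_{i=0}^{n-1} Σ_{x,a} μ_i^{π,p}(x,a) ‖ p_{i+1}(·|x,a) − q_{i+1}(·|x,a) ‖₁. -/
import Mathlib


open Finset

noncomputable section

variable {X A : Type*} [Fintype X] [Fintype A]

def IsDist {Y : Type*} [Fintype Y] (η : Y → ℝ) : Prop :=
  (∀ y, 0 ≤ η y) ∧ ∑ y, η y = 1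

/-- Occupancy measures: `occ μ0 p π n` is the state-action distribution `μ_n^{π,p}`. -/
def occ (μ0 : X × A → ℝ) (p : ℕ → X → A → X → ℝ) (π : ℕ → X → A → ℝ) :
    ℕ → X × A → ℝ
  | 0 => μ0
  | n + 1 => fun y =>
      (∑ x, ∑ a, occ μ0 p π n (x, a) * p (n + 1) x a y.1) * π (n + 1) y.1 y.2

lemma occ_nonneg (μ0 : X × A → ℝ) (hμ0 : IsDist μ0)
    (p : ℕ → X → A → X → ℝ) (hp : ∀ n x a, IsDist (p n x a))
    (π : ℕ → X → A → ℝ) (hπ : ∀ n x, IsDist (π n x)) :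
    ∀ n y, 0 ≤ occ μ0 p π n y := by
  intro n
  induction n with
  | zero => exact hμ0.1
  | succ n ih =>
    intro y
    apply mul_nonneg
    · exact Finset.sum_nonneg fun x _ => Finset.sum_nonneg fun a _ =>
        mul_nonneg (ih _) ((hp _ _ _).1 _)
    · exact (hπ _ _).1 _

/-- Kernel-perturbation bound: the L1 distance of occupancy measures induced by the same
policy under two kernels is bounded by the accumulated L1 kernel differences. -/
theorem occ_kernel_perturbation (N : ℕ)
    (μ0 : X × A → ℝ) (hμ0 : IsDist μ0)
    (p q : ℕ → X → A → X → ℝ)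
    (hp : ∀ n x a, IsDist (p n x a)) (hq : ∀ n x a, IsDist (q n x a))
    (π : ℕ → X → A → ℝ) (hπ : ∀ n x, IsDist (π n x))
    (n : ℕ) (hn : n ≤ N) :
    ∑ y : X × A, |occ μ0 p π n y - occ μ0 q π n y| ≤
      ∑ i ∈ range n, ∑ x, ∑ a,
        occ μ0 p π i (x, a) * ∑ x', |p (i + 1) x a x' - q (i + 1) x a x'| := by
  clear hn
  have hf := occ_nonneg μ0 hμ0 p hp π hπ
  induction n with
  | zero => simp [occ]
  | succ n ih =>
    set Sp : X → ℝ := fun x' => ∑ x, ∑ a, occ μ0 p π n (x, a) * p (n + 1) x a x' with hSp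
    set Sq : X → ℝ := fun x' => ∑ x, ∑ a, occ μ0 q π n (x, a) * q (n + 1) x a x' with hSq
    have L : ∑ y : X × A, |occ μ0 p π (n+1) y - occ μ0 q π (n+1) y|
        = ∑ x', |Sp x' - Sq x'| := by
      rw [Fintype.sum_prod_type]
      refine Finset.sum_congr rfl fun x' _ => ?_
      have h1 : ∀ a', |occ μ0 p π (n+1) (x', a') - occ μ0 q π (n+1) (x', a')|
          = |Sp x' - Sq x'| * π (n+1) x' a' := by
        intro a'
        show |Sp x' * π (n+1) x' a' - Sq x' * π (n+1) x' a'| = _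
        rw [← sub_mul, abs_mul, abs_of_nonneg ((hπ _ _).1 _)]
      simp_rw [h1]
      rw [← Finset.mul_sum, (hπ (n+1) x').2, mul_one]
    have key : ∀ x', |Sp x' - Sq x'| ≤
        ∑ x, ∑ a, (occ μ0 p π n (x, a) * |p (n+1) x a x' - q (n+1) x a x'|
          + |occ μ0 p π n (x, a) - occ μ0 q π n (x, a)| * q (n+1) x a x') := by
      intro x'
      rw [hSp, hSq, ← Finset.sum_sub_distrib]
      refine (Finset.abs_sum_le_sum_abs _ _).trans ?_
      refine Finset.sum_le_sum fun x _ => ?_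
      rw [← Finset.sum_sub_distrib]
      refine (Finset.abs_sum_le_sum_abs _ _).trans ?_
      refine Finset.sum_le_sum fun a _ => ?_
      have he : occ μ0 p π n (x, a) * p (n+1) x a x' - occ μ0 q π n (x, a) * q (n+1) x a x'
          = occ μ0 p π n (x, a) * (p (n+1) x a x' - q (n+1) x a x')
            + (occ μ0 p π n (x, a) - occ μ0 q π n (x, a)) * q (n+1) x a x' := by ring
      rw [he]
      refine (abs_add_le _ _).trans ?_
      rw [abs_mul, abs_mul, abs_of_nonneg (hf n (x, a)), abs_of_nonneg ((hq _ _ _).1 _)]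
    have hbound : ∑ x', |Sp x' - Sq x'| ≤
        (∑ x, ∑ a, occ μ0 p π n (x, a) * ∑ x', |p (n+1) x a x' - q (n+1) x a x'|)
          + ∑ y : X × A, |occ μ0 p π n y - occ μ0 q π n y| := by
      refine (Finset.sum_le_sum fun x' _ => key x').trans_eq ?_
      rw [Fintype.sum_prod_type]
      rw [Finset.sum_comm (γ := X)]
      rw [← Finset.sum_add_distrib]
      refine Finset.sum_congr rfl fun x _ => ?_
      rw [Finset.sum_comm (γ := X), ← Finset.sum_add_distrib]
      refine Finset.sum_congr rfl fun a _ => ?_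
      rw [Finset.sum_add_distrib, ← Finset.mul_sum, ← Finset.mul_sum, (hq (n+1) x a).2,
        mul_one]
    rw [Finset.sum_range_succ]
    refine (L ▸ hbound).trans ?_
    rw [add_comm]
    exact add_le_add ih le_rfl
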